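/- arXiv:0910.2907 — 2 statements merged into one kernel-verified Lean document; each statement's English description precedes it below -/
import Mathlib

section
/- Let p be a prime with p ≡ 1 or 4 (mod 5) such that ν_p(F_{α(p)}) = 1. Then for every integer n ≥ 0, ν_p(F_{p(n+1)}) = ν_p(F_{n+1}) + ν_p(F_{pn+1}). -/
/-- The restricted period (rank of apparition) of the Fibonacci sequence modulo `p`:
the least positive `n` such that `p ∣ F n`. -/
noncomputable def fibAlpha (p : ℕ) : ℕ := sInf {n | 0 < n ∧ p ∣ Nat.fib n}

/-!
Since `5` is a square modulo `p`, the Binet formula makes sense in `ZMod p`, and Fermat's little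
theorem gives `p ∣ F (p - 1)`. Hence `α = α(p)` divides `p - 1`: it is prime to `p` and
`p * n + 1 ≡ n + 1 (mod α)`. If `α ∤ n + 1`, all three valuations vanish. Otherwise expand
`F (k * m)` to second order in `F m`: for `p ∣ F m` this gives `ν_p (F (k * m)) = ν_p (F m)` when
`p ∤ k`, and `ν_p (F (p * m)) = ν_p (F m) + 1` for odd `p`. Apply the second with `m = n + 1` and
the first with `m = α`, `p * n + 1 = k * α`, where `ν_p (F α) = 1`.
-/

open Nat (fib)

theorem Nat.sub_mul_fib_eq_pow_sub_pow {R : Type*} [CommRing R] {a b : R} (hsum : a + b = 1)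
    (hprod : a * b = -1) (n : ℕ) : (a - b) * fib n = a ^ n - b ^ n := by
  induction n using Nat.twoStepInduction with
  | zero => simp
  | one => simp
  | more n ih₀ ih₁ =>
    rw [Nat.fib_add_two, Nat.cast_add]
    linear_combination ih₀ + ih₁ + (b ^ (n + 1) - a ^ (n + 1)) * hsum + (a ^ n - b ^ n) * hprod

theorem ZMod.isSquare_five {p : ℕ} [Fact p.Prime] (h : p % 5 = 1 ∨ p % 5 = 4) :
    IsSquare (5 : ZMod p) := by
  have : Fact (Nat.Prime 5) := ⟨Nat.prime_five⟩
  have key := ZMod.exists_sq_eq_prime_iff_of_mod_four_eq_one (p := 5) (q := p) rfl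
    (by rintro rfl; omega)
  rw [← ZMod.natCast_mod] at key
  rcases h with h | h <;> rw [h] at key
  · exact_mod_cast key.1 ⟨1, by norm_num⟩
  · exact_mod_cast key.1 ⟨2, by norm_num⟩

theorem Nat.Prime.dvd_fib_sub_one {p : ℕ} (hp : p.Prime) (hp2 : p ≠ 2) (hp5 : p ≠ 5)
    (h5 : IsSquare (5 : ZMod p)) : p ∣ fib (p - 1) := by
  have : Fact p.Prime := ⟨hp⟩
  obtain ⟨s, hs⟩ := h5
  have h2 : (2 : ZMod p) ≠ 0 := Ring.two_ne_zero (by rwa [ZMod.ringChar_zmod_n])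
  have hs0 : s ≠ 0 := by
    rintro rfl
    rw [mul_zero, ← Nat.cast_ofNat, ZMod.natCast_eq_zero_iff] at hs
    exact hp5 ((Nat.prime_dvd_prime_iff_eq hp Nat.prime_five).1 hs)
  have hsum : (1 + s) / 2 + (1 - s) / 2 = 1 := by field_simp; ring
  have hprod : (1 + s) / 2 * ((1 - s) / 2) = -1 := by field_simp; linear_combination hs
  have hne : (1 + s) / 2 * ((1 - s) / 2) ≠ 0 := by rw [hprod]; exact neg_ne_zero.2 one_ne_zero
  have hbinet := Nat.sub_mul_fib_eq_pow_sub_pow hsum hprod (p - 1)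
  rw [ZMod.pow_card_sub_one_eq_one (left_ne_zero_of_mul hne),
    ZMod.pow_card_sub_one_eq_one (right_ne_zero_of_mul hne), sub_self,
    show (1 + s) / 2 - (1 - s) / 2 = s by field_simp; ring] at hbinet
  rw [← ZMod.natCast_eq_zero_iff]
  exact eq_zero_of_ne_zero_of_mul_left_eq_zero hs0 hbinet

theorem dvd_fib_iff_fibAlpha_dvd {p n : ℕ} (hn : 0 < n) (hpn : p ∣ fib n) (j : ℕ) :
    p ∣ fib j ↔ fibAlpha p ∣ j := by
  have hα : 0 < fibAlpha p ∧ p ∣ fib (fibAlpha p) :=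
    Nat.sInf_mem (s := {n | 0 < n ∧ p ∣ fib n}) ⟨n, hn, hpn⟩
  refine ⟨fun hj => ?_, fun h => hα.2.trans (Nat.fib_dvd _ _ h)⟩
  have hg : p ∣ fib (j.gcd (fibAlpha p)) := by
    rw [Nat.fib_gcd]
    exact Nat.dvd_gcd hj hα.2
  have hle : fibAlpha p ≤ j.gcd (fibAlpha p) :=
    Nat.sInf_le ⟨Nat.gcd_pos_of_pos_right _ hα.1, hg⟩
  rw [← le_antisymm (Nat.le_of_dvd hα.1 (Nat.gcd_dvd_right _ _)) hle]
  exact Nat.gcd_dvd_left _ _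

theorem Nat.natCast_fib_add (x m : ℕ) :
    (fib (x + m) : ℤ) = fib x * (fib (m + 1) - fib m) + fib (x + 1) * fib m := by
  have h₁ : (fib (x + m + 1) : ℤ) = fib x * fib m + fib (x + 1) * fib (m + 1) := by
    exact_mod_cast Nat.fib_add x m
  have h₂ : (fib (x + 1 + m + 1) : ℤ) = fib (x + 1) * fib m + fib (x + 2) * fib (m + 1) := by
    exact_mod_cast Nat.fib_add (x + 1) m
  have h₃ : (fib (x + 1 + m + 1) : ℤ) = fib (x + m) + fib (x + m + 1) := by
    rw [show x + 1 + m + 1 = x + m + 2 by ring]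
    exact_mod_cast Nat.fib_add_two
  have h₄ : (fib (x + 2) : ℤ) = fib x + fib (x + 1) := by exact_mod_cast Nat.fib_add_two
  linear_combination h₂ - h₁ - h₃ + fib (m + 1) * h₄

/-- The factor `fib (m + 1) ^ 2` keeps the exponents of `fib (m + 1)` from going below zero
for `k < 2`. -/
theorem Nat.fib_mul_modEq (m k : ℕ) :
    (fib (m + 1) ^ 2 * fib (k * m) : ℤ) ≡
        k * fib m * fib (m + 1) ^ (k + 1) - k.choose 2 * fib m ^ 2 * fib (m + 1) ^ k
        [ZMOD fib m ^ 3] ∧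
      (fib (m + 1) ^ 2 * fib (k * m + 1) : ℤ) ≡
        fib (m + 1) ^ (k + 2) + k.choose 2 * fib m ^ 2 * fib (m + 1) ^ k [ZMOD fib m ^ 3] := by
  induction k with
  | zero => simp
  | succ k ih =>
    obtain ⟨r, hr⟩ := ih.1.symm.dvd
    obtain ⟨s, hs⟩ := ih.2.symm.dvd
    have h₁ := Nat.natCast_fib_add (k * m) m
    have h₂ : (fib (k * m + m + 1) : ℤ) =
        fib (k * m) * fib m + fib (k * m + 1) * fib (m + 1) := by
      exact_mod_cast Nat.fib_add (k * m) m
    rw [Nat.succ_mul, Nat.choose_succ_succ', Nat.choose_one_right]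
    refine ⟨(Int.modEq_iff_dvd.2 ⟨2 * k.choose 2 * fib (m + 1) ^ k
        + (fib (m + 1) - fib m) * r + fib m * s, ?_⟩).symm,
      (Int.modEq_iff_dvd.2 ⟨-k.choose 2 * fib (m + 1) ^ k + fib m * r + fib (m + 1) * s, ?_⟩).symm⟩
    · push_cast
      linear_combination (fib (m + 1) - fib m : ℤ) * hr + fib m * hs + fib (m + 1) ^ 2 * h₁
    · push_cast
      linear_combination (fib m : ℤ) * hr + fib (m + 1) * hs + fib (m + 1) ^ 2 * h₂

theorem padicValNat_eq_of_mul_modEq {p c x y w : ℕ} [hp : Fact p.Prime] (hc : ¬p ∣ c)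
    (hy : ¬p ∣ y) (h : (c * x : ℤ) ≡ p ^ w * y [ZMOD p ^ (w + 1)]) : padicValNat p x = w := by
  obtain ⟨t, ht⟩ := h.symm.dvd
  have hz : ¬(p : ℤ) ∣ y + p * t := by
    rwa [dvd_add_left (dvd_mul_right _ t), Int.natCast_dvd_natCast]
  have hz₀ : (y : ℤ) + p * t ≠ 0 := fun h₀ => hz (h₀ ▸ dvd_zero _)
  have hcx : ((c * x : ℕ) : ℤ) = (p ^ w : ℕ) * (y + p * t) := by
    push_cast
    linear_combination ht
  have hx : x ≠ 0 := by rintro rfl; simp [hz₀, hp.out.ne_zero] at hcx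
  have := congrArg (padicValInt p) hcx
  rwa [padicValInt.mul (by simp [hp.out.ne_zero]) hz₀, padicValInt.eq_zero_of_not_dvd hz,
    padicValInt.of_nat, padicValInt.of_nat, padicValNat.mul (by rintro rfl; simp at hc) hx,
    padicValNat.eq_zero_of_not_dvd hc, padicValNat.prime_pow, zero_add, add_zero] at this

theorem exists_padicValNat_eq_succ_of_dvd {p n : ℕ} [hp : Fact p.Prime] (hn : n ≠ 0)
    (hpn : p ∣ n) : ∃ v u, padicValNat p n = v + 1 ∧ ¬p ∣ u ∧ n = p ^ (v + 1) * u := by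
  obtain ⟨v, hv⟩ := Nat.exists_eq_add_one.2 (one_le_padicValNat_of_dvd hn hpn)
  exact ⟨v, n.divMaxPow p, hv, Nat.not_dvd_divMaxPow hp.out.one_lt hn,
    hv ▸ (Nat.pow_padicValNat_mul_divMaxPow p n).symm⟩

theorem Nat.Prime.not_dvd_fib_succ {p m : ℕ} (hp : p.Prime) (hpm : p ∣ fib m) :
    ¬p ∣ fib (m + 1) :=
  (Nat.Prime.coprime_iff_not_dvd hp).1 ((Nat.fib_coprime_fib_succ m).coprime_dvd_left hpm)

theorem padicValNat_fib_mul_of_not_dvd {p m k : ℕ} [hp : Fact p.Prime] (hpm : p ∣ fib m)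
    (hpk : ¬p ∣ k) : padicValNat p (fib (k * m)) = padicValNat p (fib m) := by
  rcases Nat.eq_zero_or_pos m with rfl | hm
  · simp
  obtain ⟨v, u, hv, hu, hau⟩ := exists_padicValNat_eq_succ_of_dvd (Nat.fib_pos.2 hm).ne' hpm
  have hb := hp.out.not_dvd_fib_succ hpm
  rw [hv]
  refine padicValNat_eq_of_mul_modEq (c := fib (m + 1) ^ 2) (y := k * u * fib (m + 1) ^ (k + 1))
    (fun h => hb (hp.out.dvd_of_dvd_pow h)) ?_ ?_
  · simp only [hp.out.dvd_mul, not_or]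
    exact ⟨⟨hpk, hu⟩, fun h => hb (hp.out.dvd_of_dvd_pow h)⟩
  · obtain ⟨r, hr⟩ := (Nat.fib_mul_modEq m k).1.symm.dvd
    rw [hau] at hr
    refine (Int.modEq_iff_dvd.2
      ⟨-k.choose 2 * p ^ v * u ^ 2 * fib (m + 1) ^ k + p ^ (2 * v + 1) * u ^ 3 * r, ?_⟩).symm
    push_cast at hr ⊢
    linear_combination hr

theorem padicValNat_fib_prime_mul {p m : ℕ} [hp : Fact p.Prime] (hp2 : p ≠ 2) (hm : 0 < m)
    (hpm : p ∣ fib m) : padicValNat p (fib (p * m)) = padicValNat p (fib m) + 1 := by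
  obtain ⟨v, u, hv, hu, hau⟩ := exists_padicValNat_eq_succ_of_dvd (Nat.fib_pos.2 hm).ne' hpm
  have hb := hp.out.not_dvd_fib_succ hpm
  -- Oddness of `p` gives `p ∣ p.choose 2`, which pushes the second-order term past `p ^ (v + 2)`.
  obtain ⟨c, hc⟩ := hp.out.dvd_choose_self two_ne_zero (hp.out.two_le.lt_of_ne' hp2)
  rw [hv]
  refine padicValNat_eq_of_mul_modEq (c := fib (m + 1) ^ 2) (y := u * fib (m + 1) ^ (p + 1))
    (fun h => hb (hp.out.dvd_of_dvd_pow h)) ?_ ?_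
  · simp only [hp.out.dvd_mul, not_or]
    exact ⟨hu, fun h => hb (hp.out.dvd_of_dvd_pow h)⟩
  · obtain ⟨r, hr⟩ := (Nat.fib_mul_modEq m p).1.symm.dvd
    rw [hau, hc] at hr
    refine (Int.modEq_iff_dvd.2
      ⟨-c * p ^ v * u ^ 2 * fib (m + 1) ^ p + p ^ (2 * v) * u ^ 3 * r, ?_⟩).symm
    push_cast at hr ⊢
    linear_combination hr

theorem nup_fib_p_mul_succ (p : ℕ) (hp : p.Prime) (h : p % 5 = 1 ∨ p % 5 = 4)
    (hwall : padicValNat p (Nat.fib (fibAlpha p)) = 1) (n : ℕ) :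
    padicValNat p (Nat.fib (p * (n + 1))) =
      padicValNat p (Nat.fib (n + 1)) + padicValNat p (Nat.fib (p * n + 1)) := by
  have : Fact p.Prime := ⟨hp⟩
  have hp2 : p ≠ 2 := by rintro rfl; omega
  have hpF : p ∣ fib (p - 1) :=
    hp.dvd_fib_sub_one hp2 (by rintro rfl; omega) (ZMod.isSquare_five h)
  have hdvd := dvd_fib_iff_fibAlpha_dvd (Nat.sub_pos_of_lt hp.one_lt) hpF
  have hαp : fibAlpha p ∣ p - 1 := (hdvd _).1 hpF
  have hmod : p * n + 1 ≡ n + 1 [MOD fibAlpha p] := by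
    have : p ≡ 1 [MOD fibAlpha p] := ((Nat.modEq_iff_dvd' hp.one_le).2 hαp).symm
    simpa using (this.mul_right n).add_right 1
  by_cases hα : fibAlpha p ∣ n + 1
  · obtain ⟨k, hk⟩ := (hmod.dvd_iff dvd_rfl).2 hα
    have hpk : ¬p ∣ k := fun hpk => hp.not_dvd_one
      ((Nat.dvd_add_right (dvd_mul_right p n)).1 (hk ▸ dvd_mul_of_dvd_right hpk _))
    rw [padicValNat_fib_prime_mul hp2 n.succ_pos ((hdvd _).2 hα), hk, mul_comm,
      padicValNat_fib_mul_of_not_dvd ((hdvd _).2 dvd_rfl) hpk, hwall]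
  · have hcop : (fibAlpha p).Coprime p :=
      ((Nat.coprime_self_sub_left hp.one_le).2 (Nat.coprime_one_left p)).coprime_dvd_left hαp
    rw [padicValNat.eq_zero_of_not_dvd (mt (hdvd _).1 hα),
      padicValNat.eq_zero_of_not_dvd (mt (hdvd _).1 (mt hcop.dvd_of_dvd_mul_left hα)),
      padicValNat.eq_zero_of_not_dvd (mt (hdvd _).1 (mt (hmod.dvd_iff dvd_rfl).1 hα))]
end

section
/- Let p be a prime with p ≡ 13 or 17 (mod 20) such that ν_p(F_{α(p)}) = 1. Then for every integer n ≥ 0, ν_p(F_{p(n+1)}) = ν_p(F_{n+1}) + ν_p(F_{pn + (p−1)/2}). -/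
open Nat (fib)

theorem Nat.fib_succ_mul_mul_fib_modEq (m t : ℕ) :
    fib ((m + 1) * (t + 1)) * fib m ≡
      (t + 1) * fib (m + 1) * fib m ^ (t + 1) + (t + 1).choose 2 * fib (m + 1) ^ 2 * fib m ^ t
      [MOD fib (m + 1) ^ 3] := by
  rw [← ZMod.natCast_eq_natCast_iff]
  set a : ZMod (fib (m + 1) ^ 3) := ↑(fib (m + 1))
  set c : ZMod (fib (m + 1) ^ 3) := ↑(fib m)
  have ha : a ^ 3 = 0 := by rw [← Nat.cast_pow, ZMod.natCast_self]
  have hsucc : (fib (m + 1 + 1) : ZMod (fib (m + 1) ^ 3)) = c + a := by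
    rw [fib_add_two]; push_cast; rfl
  -- the second identity, for `F ((m + 1) * (t + 1) + 1)`, is needed to carry the induction
  suffices ∀ t : ℕ,
      (fib ((m + 1) * (t + 1)) : ZMod (fib (m + 1) ^ 3)) * c =
        (t + 1) * a * c ^ (t + 1) + (t + 1).choose 2 * a ^ 2 * c ^ t ∧
      (fib ((m + 1) * (t + 1) + 1) : ZMod (fib (m + 1) ^ 3)) * c =
        c ^ (t + 2) + (t + 1) * a * c ^ (t + 1) + 2 * (t + 1).choose 2 * a ^ 2 * c ^ t by
    push_cast
    exact (this t).1
  intro t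
  induction t with
  | zero =>
    norm_num [hsucc, a]
    ring
  | succ t ih =>
    obtain ⟨ih₁, ih₂⟩ := ih
    have hF : (fib ((m + 1) * (t + 1 + 1)) : ZMod (fib (m + 1) ^ 3)) =
        fib ((m + 1) * (t + 1)) * c + fib ((m + 1) * (t + 1) + 1) * a := by
      rw [show (m + 1) * (t + 1 + 1) = (m + 1) * (t + 1) + m + 1 by ring, Nat.fib_add]
      push_cast; rfl
    have hF' : (fib ((m + 1) * (t + 1 + 1) + 1) : ZMod (fib (m + 1) ^ 3)) =
        fib ((m + 1) * (t + 1) + 1) * c +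
          (fib ((m + 1) * (t + 1)) + fib ((m + 1) * (t + 1) + 1)) * a := by
      rw [show (m + 1) * (t + 1 + 1) + 1 = (m + 1) * (t + 1) + 1 + m + 1 by ring, Nat.fib_add,
        Nat.fib_add_two]
      push_cast; rfl
    have hchoose :
        ((t + 1 + 1).choose 2 : ZMod (fib (m + 1) ^ 3)) = (t + 1).choose 2 + (t + 1) := by
      rw [Nat.choose_succ_succ, Nat.choose_one_right]; push_cast; ring
    rw [hF, hF', hchoose]
    push_cast
    constructor
    · linear_combination c * ih₁ + a * ih₂ + 2 * (t + 1).choose 2 * c ^ t * ha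
    · linear_combination c * ih₂ + a * ih₁ + a * ih₂ + 3 * (t + 1).choose 2 * c ^ t * ha

theorem padicValNat_eq_of_modEq {p v x y : ℕ} [Fact p.Prime] (hy : y ≠ 0)
    (hv : padicValNat p y = v) (h : x ≡ y [MOD p ^ (v + 1)]) : padicValNat p x = v := by
  have hy₁ : ¬ p ^ (v + 1) ∣ y := hv ▸ pow_succ_padicValNat_not_dvd hy
  have hx₁ : ¬ p ^ (v + 1) ∣ x := fun hx => hy₁ ((h.dvd_iff dvd_rfl).1 hx)
  have hx₀ : x ≠ 0 := by rintro rfl; exact hx₁ (dvd_zero _)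
  have hx : p ^ v ∣ x :=
    (h.dvd_iff (pow_dvd_pow p v.le_succ)).2 (hv ▸ pow_padicValNat_dvd)
  rw [padicValNat_dvd_iff_le hx₀] at hx hx₁
  omega

theorem pow_padicValNat_dvd_choose_two {p : ℕ} [hp : Fact p.Prime] (hp2 : p ≠ 2) (n : ℕ) :
    p ^ padicValNat p n ∣ n.choose 2 := by
  rcases n with _ | n
  · simp
  have hcop : Nat.Coprime (p ^ padicValNat p (n + 1)) 2 :=
    Nat.Coprime.pow_left _ ((Nat.coprime_primes hp.out Nat.prime_two).2 hp2)
  refine hcop.dvd_of_dvd_mul_right (Dvd.dvd.trans pow_padicValNat_dvd ?_)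
  exact ⟨n.choose 1, by rw [Nat.add_one_mul_choose_eq]⟩

theorem padicValNat_fib_mul_of_lt {p m u : ℕ} [hp : Fact p.Prime] (hp2 : p ≠ 2) (hu : 0 < u)
    (hlt : padicValNat p u < 2 * padicValNat p (fib m)) :
    padicValNat p (fib (m * u)) = padicValNat p (fib m) + padicValNat p u := by
  set k := padicValNat p (fib m)
  set j := padicValNat p u
  obtain ⟨m, rfl⟩ : ∃ m', m = m' + 1 :=
    Nat.exists_eq_succ_of_ne_zero (by rintro rfl; simp [k] at hlt)
  obtain ⟨t, rfl⟩ := Nat.exists_eq_succ_of_ne_zero hu.ne'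
  have hpa : p ∣ fib (m + 1) := dvd_of_one_le_padicValNat (by omega)
  have hpc : ¬ p ∣ fib m := fun hpc =>
    hp.out.not_dvd_one ((Nat.fib_coprime_fib_succ m).gcd_eq_one ▸ Nat.dvd_gcd hpc hpa)
  have ha₀ : fib (m + 1) ≠ 0 := (Nat.fib_pos.2 m.succ_pos).ne'
  have hc₀ : fib m ≠ 0 := fun h => hpc (h ▸ dvd_zero p)
  have hpk : p ^ k ∣ fib (m + 1) := pow_padicValNat_dvd
  have hmod : fib ((m + 1) * (t + 1)) * fib m ≡ (t + 1) * fib (m + 1) * fib m ^ (t + 1)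
      [MOD p ^ (k + j + 1)] := by
    have hcube : p ^ (k + j + 1) ∣ fib (m + 1) ^ 3 :=
      (pow_dvd_pow p (by omega)).trans (pow_mul p k 3 ▸ pow_dvd_pow_of_dvd hpk 3)
    have hbinom : p ^ (k + j + 1) ∣ (t + 1).choose 2 * fib (m + 1) ^ 2 * fib m ^ t :=
      calc p ^ (k + j + 1) ∣ p ^ j * (p ^ k) ^ 2 := by
            rw [← pow_mul, ← pow_add]; exact pow_dvd_pow p (by omega)
        _ ∣ (t + 1).choose 2 * fib (m + 1) ^ 2 * fib m ^ t :=
            Dvd.dvd.mul_right (mul_dvd_mul (pow_padicValNat_dvd_choose_two hp2 _)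
              (pow_dvd_pow_of_dvd hpk 2)) _
    simpa using ((Nat.fib_succ_mul_mul_fib_modEq m t).of_dvd hcube).trans
      ((Nat.modEq_zero_iff_dvd.2 hbinom).add_left _)
  have hval : padicValNat p ((t + 1) * fib (m + 1) * fib m ^ (t + 1)) = k + j := by
    rw [padicValNat.mul (mul_ne_zero hu.ne' ha₀) (pow_ne_zero _ hc₀),
      padicValNat.mul hu.ne' ha₀, padicValNat.pow, padicValNat.eq_zero_of_not_dvd hpc]
    omega
  have := padicValNat_eq_of_modEq (by positivity) hval hmod
  rwa [padicValNat.mul (Nat.fib_pos.2 (by positivity)).ne' hc₀,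
    padicValNat.eq_zero_of_not_dvd hpc, add_zero] at this

theorem padicValNat_fib_mul {p m u : ℕ} [hp : Fact p.Prime] (hp2 : p ≠ 2) (hm : 0 < m)
    (hpm : p ∣ fib m) (hu : 0 < u) :
    padicValNat p (fib (m * u)) = padicValNat p (fib m) + padicValNat p u := by
  have hk : 1 ≤ padicValNat p (fib m) := one_le_padicValNat_of_dvd (Nat.fib_pos.2 hm).ne' hpm
  induction u using Nat.strong_induction_on with
  | _ u ih =>
    by_cases hpu : p ∣ u
    · obtain ⟨v, rfl⟩ := hpu
      have hv : 0 < v := pos_of_mul_pos_right hu (Nat.zero_le p)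
      have ihv := ih v (lt_mul_left hv hp.out.one_lt) hv
      rw [show m * (p * v) = m * v * p by ring,
        padicValNat_fib_mul_of_lt hp2 hp.out.pos (by rw [padicValNat_self, ihv]; omega), ihv,
        padicValNat.mul hp.out.ne_zero hv.ne', padicValNat_self]
      omega
    · exact padicValNat_fib_mul_of_lt hp2 hu (by rw [padicValNat.eq_zero_of_not_dvd hpu]; omega)

theorem mul_fib_eq_pow_sub_pow {R : Type*} [CommRing R] {g : R} (hg : g ^ 2 = g + 1) (n : ℕ) :
    (2 * g - 1) * fib n = g ^ n - (1 - g) ^ n := by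
  induction n using Nat.twoStepInduction with
  | zero => simp
  | one => simp; ring
  | more n ih₁ ih₂ =>
    rw [Nat.fib_add_two, Nat.cast_add]
    linear_combination ih₁ + ih₂ - (g ^ n - (1 - g) ^ n) * hg

theorem ZMod.five_pow_div_two_eq_neg_one {p : ℕ} [Fact p.Prime] (hp2 : p ≠ 2)
    (hp5 : p % 5 = 2 ∨ p % 5 = 3) : (5 : ZMod p) ^ (p / 2) = -1 := by
  have hp_sq : ¬ IsSquare (p : ZMod 5) := by
    rw [← ZMod.natCast_mod]
    rcases hp5 with h | h <;> rw [h] <;> decide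
  have : Fact (Nat.Prime 5) := ⟨by norm_num⟩
  have h₀ : ((5 : ℕ) : ZMod p) ≠ 0 := by
    rw [Ne, ZMod.natCast_eq_zero_iff, Nat.prime_dvd_prime_iff_eq Fact.out this.out]
    omega
  have h5_sq : ¬ IsSquare ((5 : ℕ) : ZMod p) := by
    rwa [← ZMod.exists_sq_eq_prime_iff_of_mod_four_eq_one (by norm_num) hp2]
  exact_mod_cast (ZMod.pow_div_two_eq_neg_one_or_one p h₀).resolve_left
    fun h => h5_sq ((ZMod.euler_criterion p h₀).2 h)

theorem pow_char_eq_one_sub {R : Type*} [CommRing R] {p : ℕ} [hp : Fact p.Prime] [CharP R p]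
    (hp2 : p ≠ 2) {g : R} (hg : g ^ 2 = g + 1) (h5 : (5 : ZMod p) ^ (p / 2) = -1) :
    g ^ p = 1 - g := by
  let f := ZMod.castHom (dvd_refl p) R
  have h2 : IsUnit (2 : R) := map_ofNat f 2 ▸
    (isUnit_iff_ne_zero.2 (Ring.two_ne_zero (by rwa [ZMod.ringChar_zmod_n]))).map f
  have h2p : (2 : R) ^ p = 2 := by rw [← map_ofNat f 2, ← map_pow, ZMod.pow_card]
  have h5R : (5 : R) ^ (p / 2) = -1 := by rw [← map_ofNat f 5, ← map_pow, h5, map_neg, map_one]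
  have hodd : p = 2 * (p / 2) + 1 := by obtain ⟨k, hk⟩ := hp.out.odd_of_ne_two hp2; omega
  -- `2 * g - 1` is a square root of `5`, and Euler's criterion computes its Frobenius image
  have hsp : (2 * g - 1) ^ p = -(2 * g - 1) :=
    calc (2 * g - 1) ^ p = (2 * g - 1) * ((2 * g - 1) ^ 2) ^ (p / 2) := by
          rw [← pow_mul, ← _root_.pow_succ', ← hodd]
      _ = -(2 * g - 1) := by rw [show (2 * g - 1) ^ 2 = 5 by linear_combination 4 * hg, h5R]; ring
  rw [sub_pow_char, mul_pow, h2p, one_pow] at hsp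
  exact h2.mul_left_cancel (by linear_combination hsp)

theorem cast_fib_eq_zero_of_pow_two_mul_eq_neg_one {R : Type*} [CommRing R] {g : R}
    (hg : g ^ 2 = g + 1) (h5 : IsUnit (5 : R)) {n : ℕ} (hn : Odd n) (h : g ^ (2 * n) = -1) :
    (fib n : R) = 0 := by
  have hgn : IsUnit (g ^ n) := .of_mul_eq_one (-g ^ n) (by linear_combination -h)
  have hconj : (1 - g) ^ n = g ^ n := hgn.mul_left_cancel <| by
    have : g ^ n * (1 - g) ^ n = -1 := by
      rw [← mul_pow, show g * (1 - g) = -1 by linear_combination -hg, hn.neg_one_pow]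
    linear_combination this - h
  have hs : IsUnit (2 * g - 1) :=
    (isUnit_pow_iff two_ne_zero).1 (by rwa [show (2 * g - 1) ^ 2 = 5 by linear_combination 4 * hg])
  exact hs.mul_left_cancel (by rw [mul_fib_eq_pow_sub_pow hg, hconj, sub_self, mul_zero])

theorem Nat.Prime.dvd_fib_add_one_div_two {p : ℕ} (hp : p.Prime) (hp4 : p % 4 = 1)
    (hp5 : p % 5 = 2 ∨ p % 5 = 3) : p ∣ fib ((p + 1) / 2) := by
  have : Fact p.Prime := ⟨hp⟩
  have hp2 : p ≠ 2 := by omega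
  let R := QuadraticAlgebra (ZMod p) 1 1
  have : CharP R p := charP_of_injective_algebraMap QuadraticAlgebra.algebraMap_injective p
  let g : R := QuadraticAlgebra.omega
  have hg : g ^ 2 = g + 1 := by
    rw [sq, QuadraticAlgebra.omega_mul_omega_eq_add, one_smul, one_smul, add_comm]
  have h5 := ZMod.five_pow_div_two_eq_neg_one hp2 hp5
  have h5R : IsUnit (5 : R) := map_ofNat (ZMod.castHom (dvd_refl p) R) 5 ▸
    ((isUnit_pow_iff (by omega)).1 (h5 ▸ isUnit_one.neg)).map (ZMod.castHom (dvd_refl p) R)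
  rw [← CharP.cast_eq_zero_iff R p]
  refine cast_fib_eq_zero_of_pow_two_mul_eq_neg_one hg h5R (Nat.odd_iff.2 (by omega)) ?_
  rw [show 2 * ((p + 1) / 2) = p + 1 by omega, pow_succ, pow_char_eq_one_sub hp2 hg h5]
  linear_combination -hg

theorem fibAlpha_pos {p n : ℕ} (hn : 0 < n) (h : p ∣ fib n) : 0 < fibAlpha p :=
  (Nat.sInf_mem (⟨n, hn, h⟩ : {n | 0 < n ∧ p ∣ fib n}.Nonempty)).1

theorem dvd_fib_fibAlpha {p : ℕ} (h : 0 < fibAlpha p) : p ∣ fib (fibAlpha p) :=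
  (Nat.sInf_mem (Nat.nonempty_of_pos_sInf h)).2

theorem dvd_fib_iff_fibAlpha_dvd_s14 {p k : ℕ} (h : 0 < fibAlpha p) :
    p ∣ fib k ↔ fibAlpha p ∣ k := by
  refine ⟨fun hk => ?_, fun hk => (dvd_fib_fibAlpha h).trans (Nat.fib_dvd _ _ hk)⟩
  rcases k.eq_zero_or_pos with rfl | hk₀
  · exact dvd_zero _
  have hgcd : p ∣ fib (k.gcd (fibAlpha p)) := by
    rw [Nat.fib_gcd]; exact Nat.dvd_gcd hk (dvd_fib_fibAlpha h)
  have hle : fibAlpha p ≤ k.gcd (fibAlpha p) :=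
    Nat.sInf_le ⟨Nat.gcd_pos_of_pos_left _ hk₀, hgcd⟩
  rw [← le_antisymm (Nat.le_of_dvd h (Nat.gcd_dvd_right _ _)) hle]
  exact Nat.gcd_dvd_left _ _

theorem padicValNat_fib {p k : ℕ} [Fact p.Prime] (hp2 : p ≠ 2) (hα : 0 < fibAlpha p)
    (hpα : ¬ p ∣ fibAlpha p) (hk : 0 < k) :
    padicValNat p (fib k) =
      if fibAlpha p ∣ k then padicValNat p (fib (fibAlpha p)) + padicValNat p k else 0 := by
  split_ifs with hαk
  · obtain ⟨u, rfl⟩ := hαk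
    have hu : 0 < u := pos_of_mul_pos_right hk (Nat.zero_le _)
    rw [padicValNat_fib_mul hp2 hα (dvd_fib_fibAlpha hα) hu, padicValNat.mul hα.ne' hu.ne',
      padicValNat.eq_zero_of_not_dvd hpα, zero_add]
  · exact padicValNat.eq_zero_of_not_dvd (mt (dvd_fib_iff_fibAlpha_dvd_s14 hα).1 hαk)

theorem nup_fib_p_mul_succ_13_17 (p : ℕ) (hp : p.Prime)
    (h : p % 20 = 13 ∨ p % 20 = 17)
    (hwall : padicValNat p (Nat.fib (fibAlpha p)) = 1) (n : ℕ) :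
    padicValNat p (Nat.fib (p * (n + 1))) =
      padicValNat p (Nat.fib (n + 1)) +
        padicValNat p (Nat.fib (p * n + (p - 1) / 2)) := by
  have : Fact p.Prime := ⟨hp⟩
  have hp2 : p ≠ 2 := by omega
  have hhalf : p ∣ fib ((p + 1) / 2) := hp.dvd_fib_add_one_div_two (by omega) (by omega)
  have hα : 0 < fibAlpha p := fibAlpha_pos (by omega) hhalf
  have hαhalf : fibAlpha p ∣ (p + 1) / 2 := (dvd_fib_iff_fibAlpha_dvd_s14 hα).1 hhalf
  have hpα : ¬ p ∣ fibAlpha p := fun hpα =>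
    absurd ((Nat.le_of_dvd hα hpα).trans (Nat.le_of_dvd (by omega) hαhalf)) (by omega)
  have h₁ : fibAlpha p ∣ p * (n + 1) ↔ fibAlpha p ∣ n + 1 :=
    (hp.coprime_iff_not_dvd.2 hpα).symm.dvd_mul_left
  have h₂ : fibAlpha p ∣ p * n + (p - 1) / 2 ↔ fibAlpha p ∣ p * (n + 1) := by
    rw [show p * (n + 1) = p * n + (p - 1) / 2 + (p + 1) / 2 by rw [mul_add]; omega]
    exact (Nat.dvd_add_left hαhalf).symm
  have hv : padicValNat p (p * n + (p - 1) / 2) = 0 := by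
    refine padicValNat.eq_zero_of_not_dvd fun hpv => ?_
    have := Nat.eq_zero_of_dvd_of_lt ((Nat.dvd_add_right (dvd_mul_right p n)).1 hpv)
      (by omega : (p - 1) / 2 < p)
    omega
  rw [padicValNat_fib (k := p * (n + 1)) hp2 hα hpα (Nat.mul_pos hp.pos n.succ_pos),
    padicValNat_fib (k := n + 1) hp2 hα hpα n.succ_pos,
    padicValNat_fib (k := p * n + (p - 1) / 2) hp2 hα hpα (by omega)]
  simp only [h₂, h₁, hwall]
  split_ifs
  · rw [padicValNat.mul hp.ne_zero n.succ_ne_zero, padicValNat_self, hv]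
    ring
  · rfl
end
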